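/- If A(t) is a fanning frame of the form with top block the n×n identity and bottom block M(t) (a smooth curve of n×n matrices with Ṁ(t) invertible), then {A(t),t} = d/dt(Ṁ^{-1}M̈) − (1/2)(Ṁ^{-1}M̈)². -/

import Mathlib

/-!
The top block of `Ä + ȦP + AQ = 0` for `A = (I; M)` forces `Q = 0`, and the bottom block then
reads `M̈ + ṀP = 0`, i.e. `P = -Ṁ⁻¹M̈`. Substituting into `2Q - P²/2 - Ṗ` gives the claim.
-/

open Matrix

noncomputable section

/-- `MDeriv A A'` says that `A'` is the entrywise derivative of the matrix curve `A`. -/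
def MDeriv {m k : Type*} (A A' : ℝ → Matrix m k ℝ) : Prop :=
  ∀ (i : m) (j : k) (t : ℝ), HasDerivAt (fun s => A s i j) (A' t i j) t

namespace MDeriv

variable {m k : Type*} {A A' B' : ℝ → Matrix m k ℝ}

theorem unique (hA : MDeriv A A') (hB : MDeriv A B') : A' = B' :=
  funext fun t => Matrix.ext fun i j => (hA i j t).unique (hB i j t)

theorem neg (hA : MDeriv A A') : MDeriv (fun t => -A t) (fun t => -A' t) :=
  fun i j t => (hA i j t).neg

end MDeriv

namespace Matrix

theorem fromRows_add_fromRows {R m₁ m₂ n : Type*} [Add R] (A₁ B₁ : Matrix m₁ n R)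
    (A₂ B₂ : Matrix m₂ n R) :
    fromRows A₁ A₂ + fromRows B₁ B₂ = fromRows (A₁ + B₁) (A₂ + B₂) := by
  ext (_ | _) _ <;> rfl

theorem graphFrame_secondOrder_eq_zero_iff {R m n : Type*} [Semiring R] [Fintype n]
    [DecidableEq n] (M M' M'' : Matrix m n R) (P Q : Matrix n n R) :
    fromRows (0 : Matrix n n R) M'' + fromRows (0 : Matrix n n R) M' * P
      + fromRows (1 : Matrix n n R) M * Q = 0 ↔ Q = 0 ∧ M'' + M' * P = 0 := by
  rw [fromRows_mul, fromRows_mul, fromRows_add_fromRows, fromRows_add_fromRows,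
    ← fromRows_zero, fromRows_ext_iff]
  constructor
  · rintro ⟨hQ, hM⟩
    simp only [Matrix.zero_mul, Matrix.one_mul, zero_add] at hQ
    simpa [hQ] using hM
  · rintro ⟨rfl, hM⟩
    simpa using hM

theorem eq_neg_inv_mul_of_add_mul_eq_zero {α n : Type*} [CommRing α] [Fintype n] [DecidableEq n]
    {B C X : Matrix n n α} (hB : IsUnit B) (h : C + B * X = 0) : X = -(B⁻¹ * C) := by
  calc X = B⁻¹ * (B * X) :=
        (nonsing_inv_mul_cancel_left B X ((isUnit_iff_isUnit_det B).mp hB)).symm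
    _ = -(B⁻¹ * C) := by rw [eq_neg_of_add_eq_zero_right h, Matrix.mul_neg]

end Matrix

theorem stmt11_general {n : ℕ} (M M' M'' N N' : ℝ → Matrix (Fin n) (Fin n) ℝ)
    (P P' Q : ℝ → Matrix (Fin n) (Fin n) ℝ)
    (hMu : ∀ t, IsUnit (M' t))
    (hN : ∀ t, N t = (M' t)⁻¹ * M'' t) (hN' : MDeriv N N')
    (hPQ : ∀ t, fromRows (0 : Matrix (Fin n) (Fin n) ℝ) (M'' t)
        + fromRows (0 : Matrix (Fin n) (Fin n) ℝ) (M' t) * P t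
        + fromRows (1 : Matrix (Fin n) (Fin n) ℝ) (M t) * Q t = 0)
    (hP' : MDeriv P P') :
    ∀ t, (2 : ℝ) • Q t - (2⁻¹ : ℝ) • (P t * P t) - P' t
        = N' t - (2⁻¹ : ℝ) • (N t * N t) := by
  have hQ t : Q t = 0 := ((graphFrame_secondOrder_eq_zero_iff _ _ _ _ _).mp (hPQ t)).1
  have hPN : P = fun t => -N t := funext fun t =>
    (hN t).symm ▸ eq_neg_inv_mul_of_add_mul_eq_zero (hMu t)
      ((graphFrame_secondOrder_eq_zero_iff _ _ _ _ _).mp (hPQ t)).2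
  have hP'N : P' = fun t => -N' t := (hPN ▸ hP').unique hN'.neg
  intro t
  rw [hQ, hPN, hP'N, neg_mul_neg, smul_zero, zero_sub, sub_neg_eq_add, neg_add_eq_sub]

/-- for a fanning frame with top block the identity and bottom block
`M(t)`, the Schwarzian `{A(t),t} = 2Q - (1/2)P² - Ṗ` equals the matrix Schwarzian
`d/dt(Ṁ⁻¹M̈) - (1/2)(Ṁ⁻¹M̈)²`. -/
theorem stmt11 {n : ℕ} (M M' M'' N N' : ℝ → Matrix (Fin n) (Fin n) ℝ)
    (P P' Q : ℝ → Matrix (Fin n) (Fin n) ℝ)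
    (hM : MDeriv M M') (hM' : MDeriv M' M'')
    (hMu : ∀ t, IsUnit (M' t))
    (hN : ∀ t, N t = (M' t)⁻¹ * M'' t) (hN' : MDeriv N N')
    (hPQ : ∀ t, fromRows (0 : Matrix (Fin n) (Fin n) ℝ) (M'' t)
        + fromRows (0 : Matrix (Fin n) (Fin n) ℝ) (M' t) * P t
        + fromRows (1 : Matrix (Fin n) (Fin n) ℝ) (M t) * Q t = 0)
    (hP' : MDeriv P P') :
    ∀ t, (2 : ℝ) • Q t - (2⁻¹ : ℝ) • (P t * P t) - P' t
        = N' t - (2⁻¹ : ℝ) • (N t * N t) :=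
  stmt11_general M M' M'' N N' P P' Q hMu hN hN' hPQ hP'
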